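/- For all m, n > 0 there exist C > 0 and δ₀ > 0 such that for every δ ∈ (0, δ₀] and every u ≥ 0: 2m² ∫_{(n/m)u + 1/δ}^{∞} v e^{−m² v²} I₀(2 m n v u) e^{−n² u²} dv ≤ C e^{−m²/(4δ²)}. -/

import Mathlib

open MeasureTheory

/-- The modified Bessel function `I₀(y) = (1/π) ∫₀^π e^{y cos φ} dφ`. -/
noncomputable def besselI0 (y : ℝ) : ℝ :=
  (1 / Real.pi) * ∫ φ in (0:ℝ)..Real.pi, Real.exp (y * Real.cos φ)

/-!
With `p = n u` and `q = m v` the Bessel argument is `y = 2pq` and the Gaussian weights combine to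
`e^{-m²v²} e^{-n²u²} = e^{-(q - p)²} e^{-y}`. Splitting `q = (q - p) + p` and using `I₀(y) ≤ e^y`
on the first part and `I₀(y) ≤ √(π/(2y)) e^y` (from `cos φ ≤ 1 - 2φ²/π²`) on the second gives
`q I₀(y) e^{-y} ≤ (q - p) + √π/2`. So once `q - p ≥ 1` the integrand is at most
`2 (v - c) e^{-m²(v - c)²}` with `c = (n/m) u`, whose tail integral is explicit. With `δ₀ = m` this
gives the bound with `C = 2`, even with `e^{-m²/δ²}` in place of `e^{-m²/(4δ²)}`.
-/

open Real Set Filter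

lemma besselI0_nonneg (y : ℝ) : 0 ≤ besselI0 y :=
  mul_nonneg (by positivity)
    (intervalIntegral.integral_nonneg pi_pos.le fun _ _ => (exp_pos _).le)

lemma besselI0_le_exp {y : ℝ} (hy : 0 ≤ y) : besselI0 y ≤ exp y := by
  have h : ∫ φ in (0:ℝ)..π, exp (y * cos φ) ≤ ∫ _ in (0:ℝ)..π, exp y := by
    refine intervalIntegral.integral_mono_on pi_pos.le
      (Continuous.intervalIntegrable (by fun_prop) _ _) intervalIntegrable_const
      fun φ _ => exp_le_exp.2 ?_
    simpa using mul_le_mul_of_nonneg_left (cos_le_one φ) hy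
  rw [intervalIntegral.integral_const, sub_zero, smul_eq_mul] at h
  calc besselI0 y ≤ 1 / π * (π * exp y) := mul_le_mul_of_nonneg_left h (by positivity)
    _ = exp y := by field_simp

lemma besselI0_le_sqrt_mul_exp {y : ℝ} (hy : 0 < y) :
    besselI0 y ≤ √(π / (2 * y)) * exp y := by
  set b : ℝ := 2 * y / π ^ 2
  have hb : 0 < b := by positivity
  have hcos : ∫ φ in (0:ℝ)..π, exp (y * cos φ) ≤ ∫ φ in (0:ℝ)..π, exp y * exp (-b * φ ^ 2) := by
    refine intervalIntegral.integral_mono_on pi_pos.le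
      (Continuous.intervalIntegrable (by fun_prop) _ _)
      (Continuous.intervalIntegrable (by fun_prop) _ _) fun φ hφ => ?_
    rw [← exp_add, exp_le_exp]
    have := mul_le_mul_of_nonneg_left
      (cos_le_one_sub_mul_cos_sq (abs_le.2 ⟨by linarith [hφ.1, pi_pos], hφ.2⟩)) hy.le
    have e : y * (1 - 2 / π ^ 2 * φ ^ 2) = y + -b * φ ^ 2 := by ring
    linarith
  have htail : ∫ φ in (0:ℝ)..π, exp (-b * φ ^ 2) ≤ √(π / b) := by
    rw [intervalIntegral.integral_of_le pi_pos.le, ← integral_gaussian b]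
    exact setIntegral_le_integral (integrable_exp_neg_mul_sq hb)
      (Eventually.of_forall fun _ => (exp_pos _).le)
  have hsqrt : √(π / b) = π * √(π / (2 * y)) := by
    rw [show π / b = π ^ 2 * (π / (2 * y)) by simp only [b]; field_simp, sqrt_mul (by positivity),
      sqrt_sq pi_pos.le]
  rw [intervalIntegral.integral_const_mul] at hcos
  calc besselI0 y ≤ 1 / π * (exp y * √(π / b)) :=
        mul_le_mul_of_nonneg_left
          (hcos.trans (mul_le_mul_of_nonneg_left htail (exp_pos _).le)) (by positivity)
    _ = √(π / (2 * y)) * exp y := by rw [hsqrt]; field_simp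

lemma mul_besselI0_mul_exp_neg_le {p q : ℝ} (hp : 0 ≤ p) (hpq : p ≤ q) :
    p * besselI0 (2 * p * q) * exp (-(2 * p * q)) ≤ √π / 2 := by
  rcases hp.eq_or_lt with rfl | hp
  · simp only [zero_mul]; positivity
  have hq : 0 < q := hp.trans_le hpq
  have hsqrt : p * √(π / (2 * (2 * p * q))) ≤ √π / 2 := by
    refine (pow_le_pow_iff_left₀ (by positivity) (by positivity) two_ne_zero).1 ?_
    rw [mul_pow, div_pow, sq_sqrt (by positivity), sq_sqrt pi_pos.le]
    calc p ^ 2 * (π / (2 * (2 * p * q))) = π / 2 ^ 2 * (p / q) := by field_simp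
      _ ≤ π / 2 ^ 2 := mul_le_of_le_one_right (by positivity) ((div_le_one hq).2 hpq)
  calc p * besselI0 (2 * p * q) * exp (-(2 * p * q))
      ≤ p * (√(π / (2 * (2 * p * q))) * exp (2 * p * q)) * exp (-(2 * p * q)) := by
        gcongr; exact besselI0_le_sqrt_mul_exp (by positivity)
    _ = p * √(π / (2 * (2 * p * q))) * (exp (2 * p * q) * exp (-(2 * p * q))) := by ring
    _ = p * √(π / (2 * (2 * p * q))) := by rw [← exp_add, add_neg_cancel, exp_zero, mul_one]
    _ ≤ √π / 2 := hsqrt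

lemma mul_besselI0_mul_exp_neg_le_sub_add {p q : ℝ} (hp : 0 ≤ p) (hpq : p ≤ q) :
    q * besselI0 (2 * p * q) * exp (-(2 * p * q)) ≤ q - p + √π / 2 := by
  have hy : 0 ≤ 2 * p * q := by nlinarith
  have hI : besselI0 (2 * p * q) * exp (-(2 * p * q)) ≤ 1 := by
    calc besselI0 (2 * p * q) * exp (-(2 * p * q)) ≤ exp (2 * p * q) * exp (-(2 * p * q)) :=
          mul_le_mul_of_nonneg_right (besselI0_le_exp hy) (exp_pos _).le
      _ = 1 := by rw [← exp_add, add_neg_cancel, exp_zero]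
  calc q * besselI0 (2 * p * q) * exp (-(2 * p * q))
      = (q - p) * (besselI0 (2 * p * q) * exp (-(2 * p * q))) +
          p * besselI0 (2 * p * q) * exp (-(2 * p * q)) := by ring
    _ ≤ (q - p) * 1 + √π / 2 :=
        add_le_add (mul_le_mul_of_nonneg_left hI (sub_nonneg.2 hpq))
          (mul_besselI0_mul_exp_neg_le hp hpq)
    _ = q - p + √π / 2 := by ring

lemma gaussian_bessel_integrand_le {m n u v : ℝ} (hm : 0 < m) (hn : 0 ≤ n) (hu : 0 ≤ u)
    (hW : 1 ≤ m * v - n * u) :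
    v * exp (-m ^ 2 * v ^ 2) * besselI0 (2 * m * n * v * u) * exp (-n ^ 2 * u ^ 2) ≤
      2 * ((v - n / m * u) * exp (-m ^ 2 * (v - n / m * u) ^ 2)) := by
  set p := n * u
  set q := m * v
  have hpq : p ≤ q := by linarith
  have hsqrtpi : √π / 2 ≤ q - p := by
    have : √π ≤ 2 := (sqrt_le_left zero_le_two).2 (by linarith [pi_lt_four])
    linarith
  have hweights : exp (-m ^ 2 * v ^ 2) * exp (-n ^ 2 * u ^ 2) =
      exp (-(2 * p * q)) * exp (-(q - p) ^ 2) := by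
    rw [← exp_add, ← exp_add]; simp only [p, q]; ring_nf
  calc v * exp (-m ^ 2 * v ^ 2) * besselI0 (2 * m * n * v * u) * exp (-n ^ 2 * u ^ 2)
      = 1 / m * (q * besselI0 (2 * p * q) * exp (-(2 * p * q))) * exp (-(q - p) ^ 2) := by
        rw [show 2 * m * n * v * u = 2 * p * q by ring, mul_right_comm _ _ (besselI0 _),
          mul_assoc _ (exp _), hweights]
        simp only [q]
        field_simp
    _ ≤ 1 / m * (2 * (q - p)) * exp (-(q - p) ^ 2) := by
        gcongr 1 / m * ?_ * _
        linarith [mul_besselI0_mul_exp_neg_le_sub_add (by positivity) hpq]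
    _ = 2 * ((v - n / m * u) * exp (-m ^ 2 * (v - n / m * u) ^ 2)) := by
        simp only [p, q]
        field_simp

lemma hasDerivAt_exp_neg_mul_sub_sq {k : ℝ} (hk : k ≠ 0) (c x : ℝ) :
    HasDerivAt (fun v => -(1 / (2 * k)) * exp (-k * (v - c) ^ 2))
      ((x - c) * exp (-k * (x - c) ^ 2)) x := by
  have hsq : HasDerivAt (fun v => -k * (v - c) ^ 2) (-k * (2 * (x - c))) x := by
    simpa using (((hasDerivAt_id x).sub_const c).pow 2).const_mul (-k)
  refine (hsq.exp.const_mul (-(1 / (2 * k)))).congr_deriv ?_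
  field_simp

lemma tendsto_exp_neg_mul_sub_sq {k : ℝ} (hk : 0 < k) (c : ℝ) :
    Tendsto (fun v => -(1 / (2 * k)) * exp (-k * (v - c) ^ 2)) atTop (nhds 0) := by
  have hsq : Tendsto (fun v => -k * (v - c) ^ 2) atTop atBot :=
    ((tendsto_pow_atTop two_ne_zero).comp (tendsto_atTop_add_const_right _ (-c) tendsto_id))
      |>.const_mul_atTop_of_neg (neg_lt_zero.2 hk)
  simpa using (tendsto_exp_atBot.comp hsq).const_mul (-(1 / (2 * k)))

lemma integrableOn_Ioi_sub_mul_exp_neg_mul_sub_sq {k c b : ℝ} (hk : 0 < k) (hcb : c ≤ b) :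
    IntegrableOn (fun v => (v - c) * exp (-k * (v - c) ^ 2)) (Ioi b) :=
  integrableOn_Ioi_deriv_of_nonneg' (fun x _ => hasDerivAt_exp_neg_mul_sub_sq hk.ne' c x)
    (fun x hx => mul_nonneg (by linarith [hx.out]) (exp_pos _).le) (tendsto_exp_neg_mul_sub_sq hk c)

lemma integral_Ioi_sub_mul_exp_neg_mul_sub_sq {k c b : ℝ} (hk : 0 < k) (hcb : c ≤ b) :
    ∫ v in Ioi b, (v - c) * exp (-k * (v - c) ^ 2) = 1 / (2 * k) * exp (-k * (b - c) ^ 2) := by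
  rw [integral_Ioi_of_hasDerivAt_of_nonneg'
    (fun x _ => hasDerivAt_exp_neg_mul_sub_sq hk.ne' c x)
    (fun x hx => mul_nonneg (by linarith [hx.out]) (exp_pos _).le)
    (tendsto_exp_neg_mul_sub_sq hk c)]
  ring

lemma gaussian_bessel_integral_le {m n u t : ℝ} (hm : 0 < m) (hn : 0 ≤ n) (hu : 0 ≤ u)
    (ht : 1 ≤ m * t) :
    ∫ v in Ioi (n / m * u + t), v * exp (-m ^ 2 * v ^ 2) * besselI0 (2 * m * n * v * u) *
      exp (-n ^ 2 * u ^ 2) ≤ 1 / m ^ 2 * exp (-m ^ 2 * t ^ 2) := by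
  set c := n / m * u
  have hc : 0 ≤ c := by positivity
  have ht' : 0 < t := pos_of_mul_pos_right (one_pos.trans_le ht) hm.le
  calc _ ≤ ∫ v in Ioi (c + t), 2 * ((v - c) * exp (-m ^ 2 * (v - c) ^ 2)) := by
        refine integral_mono_of_nonneg (ae_restrict_of_forall_mem measurableSet_Ioi fun v hv => ?_)
          ((integrableOn_Ioi_sub_mul_exp_neg_mul_sub_sq (by positivity) (by linarith)).const_mul 2)
          (ae_restrict_of_forall_mem measurableSet_Ioi fun v hv => ?_)
        · have : 0 ≤ v := by linarith [hv.out]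
          have := besselI0_nonneg (2 * m * n * v * u)
          positivity
        · refine gaussian_bessel_integrand_le hm hn hu ?_
          have : m * v - n * u = m * (v - c) := by simp only [c]; field_simp
          rw [this]
          nlinarith [hv.out]
    _ = 1 / m ^ 2 * exp (-m ^ 2 * t ^ 2) := by
        rw [integral_const_mul, integral_Ioi_sub_mul_exp_neg_mul_sub_sq (by positivity)
          (by linarith), add_sub_cancel_left]
        field_simp

/-- Gaussian–Bessel tail estimate: for all `m, n > 0` there exist `C > 0` and `δ₀ > 0`
such that for every `0 < δ ≤ δ₀` and every `u ≥ 0`,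
`2m² ∫_{(n/m)u + 1/δ}^∞ v e^{−m²v²} I₀(2mnvu) e^{−n²u²} dv ≤ C e^{−m²/(4δ²)}`. -/
theorem gaussian_bessel_tail (m n : ℝ) (hm : 0 < m) (hn : 0 < n) :
    ∃ C > 0, ∃ δ₀ > 0, ∀ δ : ℝ, 0 < δ → δ ≤ δ₀ → ∀ u : ℝ, 0 ≤ u →
      2 * m ^ 2 * ∫ v in Set.Ioi ((n / m) * u + 1 / δ),
          v * Real.exp (-m ^ 2 * v ^ 2) * besselI0 (2 * m * n * v * u) *
            Real.exp (-n ^ 2 * u ^ 2)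
        ≤ C * Real.exp (-m ^ 2 / (4 * δ ^ 2)) := by
  refine ⟨2, two_pos, m, hm, fun δ hδ hδm u hu => ?_⟩
  have hmδ : 1 ≤ m * (1 / δ) := by rwa [mul_one_div, one_le_div hδ]
  calc _ ≤ 2 * m ^ 2 * (1 / m ^ 2 * exp (-m ^ 2 * (1 / δ) ^ 2)) := by
        gcongr; exact gaussian_bessel_integral_le hm hn.le hu hmδ
    _ = 2 * exp (-m ^ 2 / δ ^ 2) := by field_simp
    _ ≤ 2 * exp (-m ^ 2 / (4 * δ ^ 2)) := by
        gcongr 2 * exp ?_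
        rw [neg_div, neg_div, neg_le_neg_iff]
        gcongr
        linarith [pow_pos hδ 2]
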